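/- Let A be an associative Q(q)-algebra containing elements e, f and an invertible element t with relations t e t^{−1} = q² e, t f t^{−1} = q^{−2} f, and e f − f e = (t − t^{−1})/(q − q^{−1}) + a t^{−1}, where a ∈ Q(q) is a fixed scalar. Define divided powers x^{(n)} = x^n/[n]! with [m] = (q^m − q^{−m})/(q − q^{−1}). Then for every n ≥ 0: e^{(n)} f^{(n)} = ∑_{k=0}^{n} f^{(n−k)} e^{(n−k)} · (∏_{ν=0}^{k−1} ((q^{−ν}t − q^{ν}t^{−1})/(q − q^{−1}) + a q^{ν} t^{−1})) / [k]!. -/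

import Mathlib

noncomputable section

/-- The field `ℚ(q)` of rational functions over `ℚ`. -/
abbrev K : Type := RatFunc ℚ

/-- The indeterminate `q`. -/
def q : K := RatFunc.X

/-- The balanced quantum integer `[m] = (q^m - q^{-m})/(q - q⁻¹)`. -/
def qint (m : ℤ) : K := (q ^ m - q ^ (-m)) / (q - q⁻¹)

/-- The q-factorial `[n]! = [n][n-1]⋯[1]`. -/
def qfact : ℕ → K
  | 0 => 1
  | n + 1 => qint ((n : ℤ) + 1) * qfact n

lemma hq0 : q ≠ 0 := RatFunc.X_ne_zero

lemma qpow_ne_one {m : ℕ} (hm : 0 < m) : q ^ (m:ℤ) ≠ 1 := by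
  rw [zpow_natCast]
  intro h
  have : (Polynomial.X : Polynomial ℚ) ^ m = 1 := by
    apply RatFunc.algebraMap_injective ℚ
    rw [map_pow, RatFunc.algebraMap_X, map_one]; exact h
  have := congrArg (Polynomial.eval 0) this
  simp [zero_pow hm.ne'] at this

lemma hd0 : q - q⁻¹ ≠ 0 := by
  intro h
  have h1 : q * q - 1 = 0 := by
    have := congrArg (· * q) h
    simp only [sub_mul, inv_mul_cancel₀ hq0, zero_mul] at this
    exact this
  have : q ^ (2:ℤ) = 1 := by
    rw [sub_eq_zero] at h1
    rw [show (2:ℤ) = (2:ℕ) by norm_num, zpow_natCast, pow_two, h1]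
  exact qpow_ne_one (by norm_num) this

lemma qint_ne_zero {m : ℤ} (hm : 0 < m) : qint m ≠ 0 := by
  unfold qint
  apply div_ne_zero _ hd0
  rw [sub_ne_zero]
  intro h
  have h2 : q ^ (2*m) = 1 := by
    rw [two_mul, zpow_add₀ hq0]
    nth_rewrite 2 [h]
    rw [← zpow_add₀ hq0, add_neg_cancel, zpow_zero]
  obtain ⟨mm, hmm⟩ : ∃ mm:ℕ, (mm:ℤ) = 2*m := ⟨(2*m).toNat, by omega⟩
  rw [← hmm] at h2
  exact qpow_ne_one (m := mm) (by omega) h2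

lemma qfact_ne_zero (n : ℕ) : qfact n ≠ 0 := by
  induction n with
  | zero => simp [qfact]
  | succ k ih => exact mul_ne_zero (qint_ne_zero (by omega)) ih

lemma qint_zero : qint 0 = 0 := by simp [qint]

lemma qint_one : qint 1 = 1 := by
  unfold qint
  rw [div_eq_one_iff_eq hd0]
  norm_num

lemma key1 (u v : ℕ) (w : ℤ) :
    (q^(u:ℤ) - q^(-(u:ℤ))) * q^w + (q^(v:ℤ) - q^(-(v:ℤ))) * q^(w+u+v)
      = (q^((u:ℤ)+v) - q^(-((u:ℤ)+v))) * q^(w+v) := by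
  simp only [neg_add, zpow_add₀ hq0, zpow_neg]
  have hu : q^(u:ℤ) ≠ 0 := zpow_ne_zero _ hq0
  have hv : q^(v:ℤ) ≠ 0 := zpow_ne_zero _ hq0
  generalize q^(u:ℤ) = a at hu ⊢
  generalize q^(v:ℤ) = b at hv ⊢
  generalize q^(w:ℤ) = c
  field_simp
  ring

lemma S1 (u v : ℕ) (w : ℤ) :
    qint u * q^w + qint v * q^(w+u+v) = qint (u+v) * q^(w+v) := by
  unfold qint
  rw [div_mul_eq_mul_div, div_mul_eq_mul_div, div_mul_eq_mul_div, ← add_div]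
  rw [key1]

lemma S1' (u v : ℕ) (w : ℤ) :
    qint u * q^(-w) + qint v * q^(-(w+u+v)) = qint (u+v) * q^(-(w+v)) := by
  have h := S1 v u (-(w+u+v))
  rw [show (-(w+(u:ℤ)+v) + v + u) = -w by ring, show (-(w+(u:ℤ)+v) + u) = -(w+v) by ring,
    show ((v:ℤ) + u) = (u:ℤ) + v by ring] at h
  linear_combination h

section Algebra

variable {A : Type*} [Ring A] [Algebra K A] (e f t tinv : A) (a : K)
variable (ht : t * tinv = 1) (ht' : tinv * t = 1)
variable (hte : t * e = (q ^ 2) • (e * t))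
variable (htf : t * f = (q ^ (-2 : ℤ)) • (f * t))
variable (hef : e * f - f * e = (q - q⁻¹)⁻¹ • (t - tinv) + a • tinv)

/-- `H b = (q^b t - q^{-b} t⁻¹)/(q-q⁻¹) + a q^{-b} t⁻¹`. -/
def H (b : ℤ) : A :=
  ((q - q⁻¹)⁻¹ * q ^ b) • t + ((a - (q - q⁻¹)⁻¹) * q ^ (-b)) • tinv

lemma qq2 : (q:K) ^ 2 = q ^ (2:ℤ) := by rw [show (2:ℤ) = ((2:ℕ):ℤ) from rfl, zpow_natCast]

lemma zsmul_cancel (c : K) (hc : c ≠ 0) (x y : A) (h : x = c • y) : c⁻¹ • x = y := by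
  rw [h, smul_smul, inv_mul_cancel₀ hc, one_smul]

include hte in
lemma t_epow (s : ℕ) : t * e ^ s = (q ^ (2 * (s:ℤ))) • (e ^ s * t) := by
  induction s with
  | zero => simp
  | succ s ih =>
    rw [pow_succ, ← mul_assoc, ih, smul_mul_assoc, mul_assoc, hte, mul_smul_comm,
      smul_smul, ← mul_assoc, ← pow_succ, qq2, ← zpow_add₀ hq0,
      show (2*((s:ℤ)) + 2 : ℤ) = 2*((s+1:ℕ):ℤ) by push_cast; ring]

include htf in
lemma t_fpow (s : ℕ) : t * f ^ s = (q ^ (-2 * (s:ℤ))) • (f ^ s * t) := by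
  induction s with
  | zero => simp
  | succ s ih =>
    rw [pow_succ, ← mul_assoc, ih, smul_mul_assoc, mul_assoc, htf, mul_smul_comm,
      smul_smul, ← mul_assoc, ← pow_succ, ← zpow_add₀ hq0,
      show (-2*((s:ℤ)) + -2 : ℤ) = -2*((s+1:ℕ):ℤ) by push_cast; ring]

include ht ht' hte in
lemma tinv_epow (s : ℕ) : tinv * e ^ s = (q ^ (-2 * (s:ℤ))) • (e ^ s * tinv) := by
  have h : e ^ s * tinv = (q ^ (2 * (s:ℤ))) • (tinv * e ^ s) := by
    have h := congrArg (fun x => tinv * x * tinv) (t_epow e t hte s)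
    simp only [mul_smul_comm, smul_mul_assoc] at h
    rw [← mul_assoc tinv t, ht', one_mul, mul_assoc tinv (e^s*t) tinv,
      mul_assoc (e^s) t tinv, ht, mul_one] at h
    exact h
  have := zsmul_cancel (q ^ (2 * (s:ℤ))) (zpow_ne_zero _ hq0) _ _ h
  rw [← this, ← zpow_neg, show -(2*(s:ℤ)) = -2*(s:ℤ) by ring]

include ht ht' htf in
lemma tinv_fpow (s : ℕ) : tinv * f ^ s = (q ^ (2 * (s:ℤ))) • (f ^ s * tinv) := by
  have h : f ^ s * tinv = (q ^ (-2 * (s:ℤ))) • (tinv * f ^ s) := by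
    have h := congrArg (fun x => tinv * x * tinv) (t_fpow f t htf s)
    simp only [mul_smul_comm, smul_mul_assoc] at h
    rw [← mul_assoc tinv t, ht', one_mul, mul_assoc tinv (f^s*t) tinv,
      mul_assoc (f^s) t tinv, ht, mul_one] at h
    exact h
  have := zsmul_cancel (q ^ (-2 * (s:ℤ))) (zpow_ne_zero _ hq0) _ _ h
  rw [← this, ← zpow_neg, show -(-2*(s:ℤ)) = 2*(s:ℤ) by ring]

include ht ht' hte in
lemma H_mul_epow (b : ℤ) (s : ℕ) :
    H t tinv a b * e ^ s = e ^ s * H t tinv a (b + 2 * s) := by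
  unfold H
  rw [add_mul, smul_mul_assoc, smul_mul_assoc, t_epow e t hte s, tinv_epow e t tinv ht ht' hte s,
    smul_smul, smul_smul, mul_add, mul_smul_comm, mul_smul_comm]
  congr 2
  · rw [mul_assoc, ← zpow_add₀ hq0]
  · rw [mul_assoc, ← zpow_add₀ hq0, show (-b + -2*(s:ℤ)) = -(b + 2*s) by ring]

include ht ht' htf in
lemma H_mul_fpow (b : ℤ) (s : ℕ) :
    H t tinv a b * f ^ s = f ^ s * H t tinv a (b - 2 * s) := by
  unfold H
  rw [add_mul, smul_mul_assoc, smul_mul_assoc, t_fpow f t htf s, tinv_fpow f t tinv ht ht' htf s,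
    smul_smul, smul_smul, mul_add, mul_smul_comm, mul_smul_comm]
  congr 2
  · rw [mul_assoc, ← zpow_add₀ hq0, show ((b:ℤ) + -2*(s:ℤ)) = b - 2*s by ring]
  · rw [mul_assoc, ← zpow_add₀ hq0, show (-b + 2*(s:ℤ)) = -(b - 2*s) by ring]

include ht ht' in
lemma H_comm (b c : ℤ) : Commute (H t tinv a b) (H t tinv a c) := by
  have h1 : Commute t tinv := by unfold Commute SemiconjBy; rw [ht, ht']
  unfold H
  exact (((Commute.refl t).smul_left _ |>.smul_right _).add_right
      ((h1.smul_left _ |>.smul_right _))).add_left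
    (((h1.symm.smul_left _ |>.smul_right _).add_right
      ((Commute.refl tinv).smul_left _ |>.smul_right _)))

lemma Hcomb (u v : ℕ) (w : ℤ) :
    qint u • H t tinv a w + qint v • H t tinv a (w + u + v)
      = qint (u + v) • H t tinv a (w + v) := by
  simp only [H, smul_add, smul_smul]
  rw [add_add_add_comm, ← add_smul, ← add_smul]
  congr 2
  · linear_combination (q - q⁻¹)⁻¹ * S1 u v w
  · linear_combination (a - (q - q⁻¹)⁻¹) * S1' u v w

/-- `Qp c k = ∏_{ν=0}^{k-1} H (c - ν)`. -/
def Qp (c : ℤ) (k : ℕ) : A := ((List.range k).map (fun ν : ℕ => H t tinv a (c - ν))).prod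

lemma Qp_zero (c : ℤ) : Qp t tinv a c 0 = 1 := by simp [Qp]

lemma Qp_succ (c : ℤ) (k : ℕ) :
    Qp t tinv a c (k+1) = Qp t tinv a c k * H t tinv a (c - k) := by
  simp [Qp, List.range_succ]

lemma Qp_shift (c : ℤ) (k : ℕ) :
    Qp t tinv a (c+1) (k+1) = H t tinv a (c+1) * Qp t tinv a c k := by
  induction k with
  | zero => rw [Qp_zero, mul_one, Qp_succ, Qp_zero, one_mul]; norm_num
  | succ k ih =>
    rw [Qp_succ, ih, mul_assoc,
      show (c + 1 - ((k+1 : ℕ) : ℤ)) = c - (k:ℤ) by push_cast; ring, ← Qp_succ]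

include ht ht' in
lemma H_Qp_comm (b c : ℤ) (k : ℕ) :
    Commute (H t tinv a b) (Qp t tinv a c k) := by
  apply Commute.list_prod_right
  intro y hy
  simp only [List.mem_map] at hy
  obtain ⟨ν, _, rfl⟩ := hy
  exact H_comm t tinv a ht ht' b _

include ht ht' htf in
lemma H_mul_f (b : ℤ) : H t tinv a b * f = f * H t tinv a (b - 2) := by
  have h := H_mul_fpow f t tinv a ht ht' htf b 1
  rw [pow_one] at h
  rw [h]
  norm_num

include ht ht' htf hef in
lemma LemB (j : ℕ) :
    e * f ^ j = f ^ j * e + qint j • (f ^ (j-1) * H t tinv a (1 - j)) := by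
  induction j with
  | zero => simp [qint_zero]
  | succ s ih =>
    have hef0 : e * f = f * e + H t tinv a 0 := by
      have : e * f = f * e + (e * f - f * e) := by abel
      rw [this, hef]
      congr 1
      unfold H
      simp only [neg_zero, zpow_zero, mul_one, smul_sub, sub_smul]
      abel
    cases s with
    | zero =>
      simpa [qint_one] using hef0
    | succ r =>
      rw [pow_succ, ← mul_assoc, ih, add_mul, mul_assoc, hef0, smul_mul_assoc,
        mul_assoc, H_mul_f f t tinv a ht ht' htf _, mul_add, ← mul_assoc,
        ← pow_succ, ← mul_assoc, ← pow_succ]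
      have hcomb := Hcomb t tinv a (r+1) 1 (-(r+2) : ℤ)
      simp only [Nat.add_sub_cancel]
      push_cast at hcomb ⊢
      rw [qint_one, one_smul] at hcomb
      rw [show (-(((r:ℤ))+2) + ((r:ℤ)+1) + 1) = 0 by ring,
        show (-(((r:ℤ))+2) + 1) = -((r:ℤ)+1) by ring] at hcomb
      rw [show ((1:ℤ) - ((r:ℤ)+1) - 2) = -((r:ℤ)+2) by ring,
        show ((1:ℤ) - ((r:ℤ)+1+1)) = -((r:ℤ)+1) by ring]
      rw [← mul_smul_comm, ← mul_smul_comm, add_assoc, ← mul_add,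
        add_comm (H t tinv a 0), hcomb]
end Algebra

/-- coefficient `[m]![n]!/([m-k]![n-k]![k]!)` -/
def Cc (m n k : ℕ) : K := qfact m * qfact n / (qfact (m-k) * (qfact (n-k) * qfact k))

lemma qfact_succ (j : ℕ) : qfact (j+1) = qint ((j:ℤ)+1) * qfact j := rfl

lemma Cc_zero (m n : ℕ) : Cc m n 0 = 1 := by
  unfold Cc
  simp only [Nat.sub_zero]
  rw [qfact, mul_one, div_self (mul_ne_zero (qfact_ne_zero m) (qfact_ne_zero n))]

lemma r1 (m n k : ℕ) (hk : k < m) :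
    Cc m n (k+1) / qint ((m:ℤ)-k) * qint ((m:ℤ)-k) = Cc m n (k+1) := by
  rw [div_mul_cancel₀]
  exact qint_ne_zero (by omega)

lemma r2 (m n k : ℕ) (hk : k < m) (hm : m < n) :
    Cc m n k * qint ((n:ℤ)-k) = Cc m n (k+1) / qint ((m:ℤ)-k) * qint ((k:ℤ)+1) := by
  obtain ⟨M, hM1, hM2⟩ : ∃ M, m - k = M + 1 ∧ m - (k+1) = M := ⟨m-(k+1), by omega, rfl⟩
  obtain ⟨N, hN1, hN2⟩ : ∃ N, n - k = N + 1 ∧ n - (k+1) = N := ⟨n-(k+1), by omega, rfl⟩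
  have hMc : (m:ℤ) - k = (M:ℤ) + 1 := by omega
  have hNc : (n:ℤ) - k = (N:ℤ) + 1 := by omega
  unfold Cc
  rw [hM1, hN1, hM2, hN2, hMc, hNc, qfact_succ M, qfact_succ N, qfact_succ k]
  have h1 := qint_ne_zero (m := (M:ℤ)+1) (by omega)
  have h2 := qint_ne_zero (m := (N:ℤ)+1) (by omega)
  have h3 := qint_ne_zero (m := (k:ℤ)+1) (by omega)
  generalize qint ((M:ℤ)+1) = X at h1 ⊢
  generalize qint ((N:ℤ)+1) = Y at h2 ⊢
  generalize qint ((k:ℤ)+1) = Z at h3 ⊢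
  field_simp

lemma r3 (m n k : ℕ) (hk : k < m) :
    Cc (m+1) n (k+1) = Cc m n (k+1) / qint ((m:ℤ)-k) * qint ((m:ℤ)+1) := by
  obtain ⟨M, hM1, hM2⟩ : ∃ M, m - k = M + 1 ∧ m - (k+1) = M := ⟨m-(k+1), by omega, rfl⟩
  have hMc : (m:ℤ) - k = (M:ℤ) + 1 := by omega
  have hm1 : m + 1 - (k+1) = M + 1 := by omega
  unfold Cc
  rw [hm1, hM2, hMc, qfact_succ M, qfact_succ m]
  have h1 := qint_ne_zero (m := (M:ℤ)+1) (by omega)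
  have h4 := qint_ne_zero (m := (m:ℤ)+1) (by omega)
  generalize qint ((M:ℤ)+1) = X at h1 ⊢
  generalize qint ((m:ℤ)+1) = Y at h4 ⊢
  field_simp

lemma rtop (m n : ℕ) (hm : m < n) :
    Cc (m+1) n (m+1) = Cc m n m * qint ((n:ℤ)-m) := by
  obtain ⟨N, hN1, hN2⟩ : ∃ N, n - m = N + 1 ∧ n - (m+1) = N := ⟨n-(m+1), by omega, rfl⟩
  have hNc : (n:ℤ) - m = (N:ℤ) + 1 := by omega
  unfold Cc
  simp only [Nat.sub_self]
  rw [hN1, hN2, hNc, qfact_succ N, qfact_succ m]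
  have h2 := qint_ne_zero (m := (N:ℤ)+1) (by omega)
  have h4 := qint_ne_zero (m := (m:ℤ)+1) (by omega)
  rw [qfact]
  generalize qint ((N:ℤ)+1) = X at h2 ⊢
  generalize qint ((m:ℤ)+1) = Y at h4 ⊢
  field_simp

section Algebra2

variable {A : Type*} [Ring A] [Algebra K A] (e f t tinv : A) (a : K)
variable (ht : t * tinv = 1) (ht' : tinv * t = 1)
variable (hte : t * e = (q ^ 2) • (e * t))
variable (htf : t * f = (q ^ (-2 : ℤ)) • (f * t))
variable (hef : e * f - f * e = (q - q⁻¹)⁻¹ • (t - tinv) + a • tinv)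

lemma mid (m n k : ℕ) (hk : k < m) (hm : m < n) :
    Cc (m+1) n (k+1) • H t tinv a (((m:ℤ)-n)+1)
      = Cc m n (k+1) • H t tinv a ((m:ℤ)-n-k)
        + (Cc m n k * qint ((n:ℤ)-k)) • H t tinv a (2*(m:ℤ)-n-k+1) := by
  have hcomb := Hcomb t tinv a (m-k) (k+1) ((m:ℤ)-n-k)
  rw [Nat.cast_sub hk.le] at hcomb
  push_cast at hcomb
  rw [show ((m:ℤ)-n-k+((m:ℤ)-k)+((k:ℤ)+1)) = 2*(m:ℤ)-n-k+1 by ring,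
    show ((m:ℤ)-n-k+((k:ℤ)+1)) = (m:ℤ)-n+1 by ring,
    show ((m:ℤ)-(k:ℤ)+((k:ℤ)+1)) = (m:ℤ)+1 by ring] at hcomb
  rw [r3 m n k hk, r2 m n k hk hm, mul_smul, mul_smul, ← hcomb, smul_add, smul_smul,
    r1 m n k hk]

include ht ht' hte htf hef in
lemma step_term (m n k : ℕ) (hk : k ≤ m) (hm : m < n) :
    e * (Cc m n k • (f^(n-k) * (e^(m-k) * Qp t tinv a ((m:ℤ)-n) k)))
      = Cc m n k • (f^(n-k) * (e^(m+1-k) * Qp t tinv a ((m:ℤ)-n) k))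
        + (Cc m n k * qint ((n:ℤ)-k)) •
            (f^(n-(k+1)) * (e^(m-k) * (H t tinv a (2*(m:ℤ)-n-k+1) * Qp t tinv a ((m:ℤ)-n) k))) := by
  rw [mul_smul_comm, ← mul_assoc, LemB e f t tinv a ht ht' htf hef (n-k)]
  rw [Nat.cast_sub (by omega : k ≤ n),
    show (n:ℕ) - k - 1 = n - (k+1) by omega,
    show ((1:ℤ) - ((n:ℤ)-k)) = 1-(n:ℤ)+k by ring]
  rw [add_mul, smul_mul_assoc, smul_add, smul_smul]
  congr 1
  · congr 1
    rw [mul_assoc, ← mul_assoc e, ← pow_succ', show (m:ℕ)-k+1 = m+1-k by omega]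
  · congr 1
    rw [mul_assoc, ← mul_assoc (H t tinv a _), H_mul_epow e t tinv a ht ht' hte _ (m-k),
      Nat.cast_sub hk, show ((1:ℤ)-(n:ℤ)+k+2*((m:ℤ)-k)) = 2*(m:ℤ)-n-k+1 by ring, mul_assoc]

include ht ht' hte htf hef in
lemma Claim (n : ℕ) : ∀ m, m ≤ n →
    e^m * f^n = ∑ k ∈ Finset.range (m+1),
      Cc m n k • (f^(n-k) * (e^(m-k) * Qp t tinv a ((m:ℤ) - n) k)) := by
  intro m
  induction m with
  | zero =>
    intro _
    simp [Cc_zero, Qp_zero]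
  | succ m ih =>
    intro h
    have hm : m < n := by omega
    rw [pow_succ', mul_assoc, ih (by omega), Finset.mul_sum]
    have hstep : ∀ k ∈ Finset.range (m+1),
        e * (Cc m n k • (f^(n-k) * (e^(m-k) * Qp t tinv a ((m:ℤ)-n) k)))
          = Cc m n k • (f^(n-k) * (e^(m+1-k) * Qp t tinv a ((m:ℤ)-n) k))
            + (Cc m n k * qint ((n:ℤ)-k)) •
                (f^(n-(k+1)) * (e^(m-k) * (H t tinv a (2*(m:ℤ)-n-k+1)
                  * Qp t tinv a ((m:ℤ)-n) k))) := by
      intro k hkmem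
      exact step_term e f t tinv a ht ht' hte htf hef m n k
        (Nat.lt_succ_iff.mp (Finset.mem_range.mp hkmem)) hm
    rw [Finset.sum_congr rfl hstep, Finset.sum_add_distrib]
    set c : ℤ := (m:ℤ) - n with hc
    have hcast : ((m+1:ℕ):ℤ) - (n:ℤ) = c + 1 := by rw [hc]; push_cast; ring
    rw [hcast]
    rw [Finset.sum_range_succ' (fun k => Cc m n k • (f^(n-k) * (e^(m+1-k) * Qp t tinv a c k))) m]
    rw [Finset.sum_range_succ (fun k => (Cc m n k * qint ((n:ℤ)-k)) •
        (f^(n-(k+1)) * (e^(m-k) * (H t tinv a (2*(m:ℤ)-n-k+1) * Qp t tinv a c k)))) m]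
    rw [Finset.sum_range_succ' (fun k => Cc (m+1) n k • (f^(n-k) * (e^(m+1-k) * Qp t tinv a (c+1) k))) (m+1)]
    rw [Finset.sum_range_succ (fun k => Cc (m+1) n (k+1) • (f^(n-(k+1)) * (e^(m+1-(k+1)) * Qp t tinv a (c+1) (k+1)))) m]
    have h0 : Cc (m+1) n 0 • (f^(n-0) * (e^(m+1-0) * Qp t tinv a (c+1) 0))
        = Cc m n 0 • (f^(n-0) * (e^(m+1-0) * Qp t tinv a c 0)) := by
      rw [Cc_zero, Cc_zero, Qp_zero, Qp_zero]
    have htop : Cc (m+1) n (m+1) • (f^(n-(m+1)) * (e^(m+1-(m+1)) * Qp t tinv a (c+1) (m+1)))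
        = (Cc m n m * qint ((n:ℤ)-m)) •
            (f^(n-(m+1)) * (e^(m-m) * (H t tinv a (2*(m:ℤ)-n-m+1) * Qp t tinv a c m))) := by
      rw [rtop m n hm, Qp_shift]
      simp only [Nat.sub_self]
      rw [show (2*(m:ℤ)-n-m+1) = c+1 by rw [hc]; ring]
    have hmid : ∀ k ∈ Finset.range m,
        Cc (m+1) n (k+1) • (f^(n-(k+1)) * (e^(m+1-(k+1)) * Qp t tinv a (c+1) (k+1)))
          = Cc m n (k+1) • (f^(n-(k+1)) * (e^(m+1-(k+1)) * Qp t tinv a c (k+1)))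
            + (Cc m n k * qint ((n:ℤ)-k)) •
                (f^(n-(k+1)) * (e^(m-k) * (H t tinv a (2*(m:ℤ)-n-k+1) * Qp t tinv a c k))) := by
      intro k hkmem
      have hk : k < m := Finset.mem_range.mp hkmem
      rw [Nat.succ_sub_succ, Qp_shift, Qp_succ, ← (H_Qp_comm t tinv a ht ht' (c-k) c k).eq]
      have hmid' := congrArg
        (fun X => f^(n-(k+1)) * (e^(m-k) * (X * Qp t tinv a c k)))
        (mid t tinv a m n k hk hm)
      simp only [add_mul, smul_mul_assoc, mul_add, mul_smul_comm] at hmid'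
      rw [hc]
      convert hmid' using 3
    rw [htop, Finset.sum_congr rfl hmid, Finset.sum_add_distrib, h0]
    abel

lemma Qp_eq_stmt (k : ℕ) :
    Qp t tinv a 0 k = ((List.range k).map (fun ν =>
        (q - q⁻¹)⁻¹ • ((q ^ (-(ν : ℤ))) • t - (q ^ (ν : ℤ)) • tinv)
          + (a * q ^ ν) • tinv)).prod := by
  unfold Qp
  congr 1
  have hl : (do let x ← List.range k; pure ((x:ℕ):ℤ)) = List.map (fun x : ℕ => (x:ℤ)) (List.range k) := by
    induction List.range k with
    | nil => rfl
    | cons x l ih => simp_all [List.flatMap_cons]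
  rw [hl, List.map_map]
  apply List.map_congr_left
  intro ν _
  simp only [Function.comp_apply]
  unfold H
  rw [zero_sub, neg_neg, smul_sub, smul_smul, smul_smul, sub_mul, sub_smul]
  abel

end Algebra2

/-- In an associative `ℚ(q)`-algebra with elements `e, f` and invertible `t` satisfying
`tet⁻¹ = q²e`, `tft⁻¹ = q⁻²f`, `ef − fe = (t − t⁻¹)/(q − q⁻¹) + a t⁻¹`, one has for all `n`:
`e^{(n)} f^{(n)} = ∑_{k=0}^n f^{(n−k)} e^{(n−k)}
   (∏_{ν=0}^{k−1} ((q^{−ν}t − q^ν t⁻¹)/(q − q⁻¹) + a q^ν t⁻¹))/[k]!`,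
where `x^{(m)} = x^m/[m]!`. -/
theorem divided_power_commutation
    {A : Type*} [Ring A] [Algebra K A] (e f t tinv : A) (a : K)
    (ht : t * tinv = 1) (ht' : tinv * t = 1)
    (hte : t * e = (q ^ 2) • (e * t))
    (htf : t * f = (q ^ (-2 : ℤ)) • (f * t))
    (hef : e * f - f * e = (q - q⁻¹)⁻¹ • (t - tinv) + a • tinv)
    (n : ℕ) :
    ((qfact n)⁻¹ • e ^ n) * ((qfact n)⁻¹ • f ^ n)
      = ∑ k ∈ Finset.range (n + 1),
          ((qfact (n - k))⁻¹ • f ^ (n - k)) * ((qfact (n - k))⁻¹ • e ^ (n - k)) *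
            ((qfact k)⁻¹ •
              ((List.range k).map (fun ν =>
                (q - q⁻¹)⁻¹ • ((q ^ (-(ν : ℤ))) • t - (q ^ (ν : ℤ)) • tinv)
                  + (a * q ^ ν) • tinv)).prod) := by
  have hclaim := Claim e f t tinv a ht ht' hte htf hef n n le_rfl
  rw [sub_self] at hclaim
  rw [smul_mul_assoc, mul_smul_comm, smul_smul, hclaim, Finset.smul_sum]
  apply Finset.sum_congr rfl
  intro k hk
  rw [← Qp_eq_stmt t tinv a k]
  simp only [smul_mul_assoc, mul_smul_comm, smul_smul, mul_assoc]
  congr 1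
  unfold Cc
  have h1 := qfact_ne_zero n
  have h2 := qfact_ne_zero (n-k)
  have h3 := qfact_ne_zero k
  field_simp
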